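/- arXiv:2508.01377 — 4 statements merged into one kernel-verified Lean document; each statement's English description precedes it below -/
import Mathlib

section
/- For a nonnegative integrable function ρ on ℝ with finite moments C_0, ..., C_n (with x ↦ x^{n+1} ρ(x) also integrable), the Stieltjes transform G(z) = ∫ ρ(x)/(x-z) dx satisfies the asymptotic condition: lim_{t → ∞} (it)^{n+1} ( G(it) + Σ_{m=0}^{n-1} C_m / (it)^{m+1} ) = -C_n, where t ∈ ℝ, t → +∞. -/
/-!
Expanding `1 / (x - z)` as a finite geometric series in `x / z` gives, for `z` off the real axis,
`z ^ (n + 1) * (G z + ∑_{m<n} C_m / z ^ (m + 1)) = -C_n + ∫ x ^ (n + 1) ρ x / (x - z) dx`.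
Since `|x - z| ≥ |Im z|`, the remainder integral is bounded by `(∫ |x ^ (n + 1) ρ x| dx) / |Im z|`,
which tends to `0` along `z = i t`, `t → ∞`.
-/

open MeasureTheory Filter Topology Finset

theorem pow_succ_mul_div_sub_add_sum {K : Type*} [Field K] (n : ℕ) {X z : K} (r : K)
    (hz : z ≠ 0) (hXz : X - z ≠ 0) :
    z ^ (n + 1) * (r / (X - z) + ∑ m ∈ range n, X ^ m * r / z ^ (m + 1))
      = -(X ^ n * r) + X ^ (n + 1) * r / (X - z) := by
  induction n with
  | zero =>
    field_simp
    ring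
  | succ n ih =>
    rw [sum_range_succ, ← add_assoc, pow_succ, mul_add, mul_right_comm, ih]
    field_simp
    ring

namespace Complex

theorem abs_im_le_norm_ofReal_sub (x : ℝ) (z : ℂ) : |z.im| ≤ ‖(x : ℂ) - z‖ := by
  simpa using abs_im_le_norm ((x : ℂ) - z)

theorem ofReal_sub_ne_zero (x : ℝ) {z : ℂ} (hz : z.im ≠ 0) : (x : ℂ) - z ≠ 0 :=
  fun h => hz (by simpa using congrArg Complex.im h)

variable {μ : Measure ℝ} {f : ℝ → ℂ}

theorem norm_div_ofReal_sub_le (w : ℂ) (x : ℝ) {z : ℂ} (hz : z.im ≠ 0) :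
    ‖w / ((x : ℂ) - z)‖ ≤ ‖w‖ / |z.im| := by
  rw [norm_div]
  gcongr
  exact abs_im_le_norm_ofReal_sub x z

theorem integrable_div_ofReal_sub (hf : Integrable f μ) {z : ℂ} (hz : z.im ≠ 0) :
    Integrable (fun x : ℝ => f x / ((x : ℂ) - z)) μ := by
  refine (hf.norm.div_const |z.im|).mono' ?_
    (Eventually.of_forall fun x => norm_div_ofReal_sub_le (f x) x hz)
  exact hf.aestronglyMeasurable.div₀
    (continuous_ofReal.sub continuous_const).aestronglyMeasurable

theorem norm_integral_div_ofReal_sub_le (hf : Integrable f μ) {z : ℂ} (hz : z.im ≠ 0) :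
    ‖∫ x, f x / ((x : ℂ) - z) ∂μ‖ ≤ (∫ x, ‖f x‖ ∂μ) / |z.im| := by
  rw [← integral_div]
  exact norm_integral_le_of_norm_le (hf.norm.div_const _)
    (Eventually.of_forall fun x => norm_div_ofReal_sub_le (f x) x hz)

theorem tendsto_integral_div_ofReal_sub_I_mul (hf : Integrable f μ) :
    Tendsto (fun t : ℝ => ∫ x, f x / ((x : ℂ) - I * t) ∂μ) atTop (𝓝 0) := by
  have hbound : ∀ᶠ t : ℝ in atTop, ‖∫ x, f x / ((x : ℂ) - I * t) ∂μ‖ ≤ (∫ x, ‖f x‖ ∂μ) / t := by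
    filter_upwards [eventually_gt_atTop 0] with t ht
    simpa [abs_of_pos ht] using
      norm_integral_div_ofReal_sub_le hf (z := I * t) (by simpa using ht.ne')
  exact squeeze_zero_norm' hbound (tendsto_const_nhds.div_atTop tendsto_id)

theorem pow_succ_mul_stieltjes_add_sum_moments (n : ℕ)
    (hf : ∀ m ≤ n + 1, Integrable (fun x : ℝ => (x : ℂ) ^ m * f x) μ) {z : ℂ} (hz : z.im ≠ 0) :
    z ^ (n + 1) * ((∫ x, f x / ((x : ℂ) - z) ∂μ) +
        ∑ m ∈ range n, (∫ x, (x : ℂ) ^ m * f x ∂μ) / z ^ (m + 1))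
      = -(∫ x, (x : ℂ) ^ n * f x ∂μ) + ∫ x, (x : ℂ) ^ (n + 1) * f x / ((x : ℂ) - z) ∂μ := by
  have hz0 : z ≠ 0 := by rintro rfl; simp at hz
  have hterm (m : ℕ) (hm : m ∈ range n) :
      Integrable (fun x : ℝ => (x : ℂ) ^ m * f x / z ^ (m + 1)) μ :=
    (hf m (by simp at hm; omega)).div_const _
  have hG : Integrable (fun x : ℝ => f x / ((x : ℂ) - z)) μ :=
    integrable_div_ofReal_sub (by simpa using hf 0 (by omega)) hz
  have hR : Integrable (fun x : ℝ => (x : ℂ) ^ (n + 1) * f x / ((x : ℂ) - z)) μ :=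
    integrable_div_ofReal_sub (hf (n + 1) le_rfl) hz
  simp_rw [← integral_div]
  rw [← integral_finsetSum _ hterm, ← integral_add hG (integrable_finsetSum _ hterm),
    ← integral_const_mul, ← integral_neg, ← integral_add (hf n (by omega)).fun_neg hR]
  exact integral_congr_ae (Eventually.of_forall fun x =>
    pow_succ_mul_div_sub_add_sum n (f x) hz0 (ofReal_sub_ne_zero x hz))

theorem tendsto_pow_succ_mul_stieltjes_add_sum_moments (n : ℕ)
    (hf : ∀ m ≤ n + 1, Integrable (fun x : ℝ => (x : ℂ) ^ m * f x) μ) :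
    Tendsto (fun t : ℝ => (I * t) ^ (n + 1) * ((∫ x, f x / ((x : ℂ) - I * t) ∂μ) +
        ∑ m ∈ range n, (∫ x, (x : ℂ) ^ m * f x ∂μ) / (I * t) ^ (m + 1)))
      atTop (𝓝 (-∫ x, (x : ℂ) ^ n * f x ∂μ)) := by
  have hremainder := (tendsto_integral_div_ofReal_sub_I_mul (hf (n + 1) le_rfl)).const_add
    (-∫ x, (x : ℂ) ^ n * f x ∂μ)
  rw [add_zero] at hremainder
  refine hremainder.congr' ?_
  filter_upwards [eventually_gt_atTop 0] with t ht
  exact (pow_succ_mul_stieltjes_add_sum_moments n hf (by simpa using ht.ne')).symm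

end Complex

theorem stieltjes_asymptotic_general (n : ℕ) (ρ : ℝ → ℝ)
    (hint : ∀ m ≤ n + 1, Integrable (fun x : ℝ => x ^ m * ρ x)) :
    Tendsto (fun t : ℝ =>
        (Complex.I * t) ^ (n + 1) *
          ((∫ x : ℝ, (ρ x : ℂ) / ((x : ℂ) - Complex.I * t)) +
            ∑ m ∈ Finset.range n,
              ((∫ x : ℝ, x ^ m * ρ x : ℝ) : ℂ) / (Complex.I * t) ^ (m + 1)))
      atTop (nhds (-((∫ x : ℝ, x ^ n * ρ x : ℝ) : ℂ))) := by
  have hmoment_ofReal (m : ℕ) :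
      ((∫ x : ℝ, x ^ m * ρ x : ℝ) : ℂ) = ∫ x : ℝ, (x : ℂ) ^ m * ρ x := by
    rw [← integral_complex_ofReal]
    push_cast
    rfl
  simp only [hmoment_ofReal]
  exact Complex.tendsto_pow_succ_mul_stieltjes_add_sum_moments n
    fun m hm => by simpa using (hint m hm).ofReal (𝕜 := ℂ)

/-- asymptotic interpolation condition for the Stieltjes transform:
(it)^{n+1} (G(it) + Σ_{m<n} C_m/(it)^{m+1}) → -C_n as t → ∞. -/
theorem stieltjes_asymptotic (n : ℕ) (ρ : ℝ → ℝ) (hpos : ∀ x, 0 ≤ ρ x)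
    (hint : ∀ m ≤ n + 1, Integrable (fun x : ℝ => x ^ m * ρ x)) :
    Tendsto (fun t : ℝ =>
        (Complex.I * t) ^ (n + 1) *
          ((∫ x : ℝ, (ρ x : ℂ) / ((x : ℂ) - Complex.I * t)) +
            ∑ m ∈ Finset.range n,
              ((∫ x : ℝ, x ^ m * ρ x : ℝ) : ℂ) / (Complex.I * t) ^ (m + 1)))
      atTop (nhds (-((∫ x : ℝ, x ^ n * ρ x : ℝ) : ℂ))) :=
  stieltjes_asymptotic_general n ρ hint
end

section
/- Projection of a Weyl matrix ball to a disk: Let A, B, C be n×n complex matrices and let l, r ∈ ℂⁿ. Define the Weyl matrix ball B(C; A, B) = { C + A X B : X an n×n matrix with ‖X‖ ≤ 1 } (operator norm). Then { lᴴ M r : M ∈ B(C; A, B) } equals the closed disk in ℂ with center lᴴ C r and radius ‖Aᴴ l‖ · ‖B r‖. -/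
open ComplexOrder Matrix

/-- Operator norm of a matrix induced by the Euclidean norm. -/
noncomputable def opNorm {n : ℕ} (X : Matrix (Fin n) (Fin n) ℂ) : ℝ :=
  ‖Matrix.toEuclideanCLM (𝕜 := ℂ) X‖

/-- Euclidean norm of a vector. -/
noncomputable def vecNorm {n : ℕ} (v : Fin n → ℂ) : ℝ :=
  Real.sqrt (∑ i, ‖v i‖ ^ 2)

/-!
Since `lᴴ (C + A X B) r = lᴴ C r + ⟪Aᴴ l, X (B r)⟫`, it suffices to find the values of `⟪u, T v⟫`
over the contractions `T` of a Hilbert space. Cauchy–Schwarz confines them to the disk of radius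
`‖u‖ ‖v‖`, and each point `w` of that disk is attained by the rank-one operator
`x ↦ (w / (‖u‖ ‖v‖)²) ⟪v, x⟫ u`, whose norm is `‖w‖ / (‖u‖ ‖v‖)`.
-/

open InnerProductSpace Metric
open scoped Pointwise

section InnerProductSpace

variable {𝕜 E : Type*} [RCLike 𝕜] [NormedAddCommGroup E] [InnerProductSpace 𝕜 E]

theorem norm_inner_apply_le {T : E →L[𝕜] E} (hT : ‖T‖ ≤ 1) (u v : E) :
    ‖⟪u, T v⟫_𝕜‖ ≤ ‖u‖ * ‖v‖ :=
  calc ‖⟪u, T v⟫_𝕜‖ ≤ ‖u‖ * ‖T v‖ := norm_inner_le_norm u (T v)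
    _ ≤ ‖u‖ * (1 * ‖v‖) := by gcongr; exact T.le_of_opNorm_le hT v
    _ = ‖u‖ * ‖v‖ := by rw [one_mul]

theorem exists_norm_le_one_inner_apply_eq {u v : E} {w : 𝕜} (hw : ‖w‖ ≤ ‖u‖ * ‖v‖) :
    ∃ T : E →L[𝕜] E, ‖T‖ ≤ 1 ∧ ⟪u, T v⟫_𝕜 = w := by
  rcases eq_or_lt_of_le (mul_nonneg (norm_nonneg u) (norm_nonneg v)) with h0 | hpos
  · exact ⟨0, by simp, by simpa [← h0, eq_comm] using hw⟩
  refine ⟨(w / ((‖u‖ * ‖v‖) ^ 2 : ℝ)) • rankOne 𝕜 u v, ?_, ?_⟩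
  · rw [norm_smul, norm_rankOne, norm_div, RCLike.norm_ofReal, abs_of_pos (by positivity),
      pow_two, div_mul_eq_mul_div, mul_div_mul_right _ _ hpos.ne']
    exact (div_le_one hpos).2 hw
  · have hu : u ≠ 0 := by rintro rfl; simp at hpos
    have hv : v ≠ 0 := by rintro rfl; simp at hpos
    simp only [_root_.smul_apply, rankOne_apply, inner_smul_right,
      inner_self_eq_norm_sq_to_K]
    push_cast
    field_simp

theorem image_inner_apply_closedBall (u v : E) :
    (fun T : E →L[𝕜] E => ⟪u, T v⟫_𝕜) '' closedBall 0 1 = closedBall 0 (‖u‖ * ‖v‖) := by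
  ext w
  simp only [Set.mem_image, mem_closedBall, dist_zero_right]
  exact ⟨fun ⟨T, hT, hw⟩ => hw ▸ norm_inner_apply_le hT u v,
    exists_norm_le_one_inner_apply_eq⟩

end InnerProductSpace

theorem Matrix.dotProduct_add_mul_mul_mulVec {𝕜 ι : Type*} [RCLike 𝕜] [Fintype ι]
    [DecidableEq ι] (A B C X : Matrix ι ι 𝕜) (l r : ι → 𝕜) :
    star l ⬝ᵥ ((C + A * X * B) *ᵥ r) = star l ⬝ᵥ (C *ᵥ r) +
      ⟪WithLp.toLp 2 (Aᴴ *ᵥ l), toEuclideanCLM (𝕜 := 𝕜) X (WithLp.toLp 2 (B *ᵥ r))⟫_𝕜 := by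
  rw [toEuclideanCLM_toLp, EuclideanSpace.inner_toLp_toLp, add_mulVec, dotProduct_add,
    star_mulVec, conjTranspose_conjTranspose, dotProduct_comm _ (star l ᵥ* A), ← dotProduct_mulVec,
    mulVec_mulVec, mulVec_mulVec]

theorem vecNorm_eq_norm_toLp {n : ℕ} (v : Fin n → ℂ) : vecNorm v = ‖WithLp.toLp 2 v‖ := by
  rw [EuclideanSpace.norm_eq]; rfl

theorem image_toEuclideanCLM_opNorm_le_one (n : ℕ) :
    toEuclideanCLM (𝕜 := ℂ) '' {X : Matrix (Fin n) (Fin n) ℂ | opNorm X ≤ 1} = closedBall 0 1 := by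
  rw [← (EquivLike.surjective (toEuclideanCLM (𝕜 := ℂ) (n := Fin n))).image_preimage
    (closedBall 0 1)]
  congr 1
  ext X
  simp [opNorm]

/-- the projection of a Weyl matrix ball to ℂ via vectors l, r is
the closed disk with center lᴴ C r and radius ‖Aᴴ l‖ ‖B r‖. -/
theorem weyl_ball_projection (n : ℕ) (A B C : Matrix (Fin n) (Fin n) ℂ)
    (l r : Fin n → ℂ) :
    {z : ℂ | ∃ X : Matrix (Fin n) (Fin n) ℂ, opNorm X ≤ 1 ∧
        z = star l ⬝ᵥ ((C + A * X * B) *ᵥ r)}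
      = Metric.closedBall (star l ⬝ᵥ (C *ᵥ r))
          (vecNorm (Aᴴ *ᵥ l) * vecNorm (B *ᵥ r)) := by
  set u := WithLp.toLp 2 (Aᴴ *ᵥ l)
  set v := WithLp.toLp 2 (B *ᵥ r)
  have hset : {z : ℂ | ∃ X : Matrix (Fin n) (Fin n) ℂ, opNorm X ≤ 1 ∧
        z = star l ⬝ᵥ ((C + A * X * B) *ᵥ r)} =
      star l ⬝ᵥ (C *ᵥ r) +ᵥ (fun T => ⟪u, T v⟫_ℂ) ''
        (closedBall 0 1 : Set (EuclideanSpace ℂ (Fin n) →L[ℂ] EuclideanSpace ℂ (Fin n))) := by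
    ext z
    simp only [← image_toEuclideanCLM_opNorm_le_one, ← Set.image_vadd, Set.image_image,
      Set.mem_image, Set.mem_ofPred_eq, dotProduct_add_mul_mul_mulVec, vadd_eq_add, eq_comm, u, v]
  rw [hset, image_inner_apply_closedBall, vadd_closedBall, vadd_eq_add, add_zero,
    vecNorm_eq_norm_toLp, vecNorm_eq_norm_toLp]
end

section
/- Saturation step in the Weyl ball theorem: Let R be an n×n positive definite Hermitian matrix, S, T Hermitian-compatible n×n matrices with SᴴR⁻¹S - T positive definite, and G an n×n matrix satisfying -GᴴRG + GᴴS + SᴴG - T ⪰ 0. Then there exists a contractive matrix X (‖X‖ ≤ 1) such that G = R⁻¹S + R^{-1/2} X (SᴴR⁻¹S - T)^{1/2}. -/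
open ComplexOrder Matrix

/-- The square root of a positive semidefinite matrix, as `Matrix.PosSemidef.sqrt` was defined
in Mathlib (Dec 2024); that definition has since been removed. -/
noncomputable def Matrix.PosSemidef.sqrt {m 𝕜 : Type*} [Fintype m] [DecidableEq m] [RCLike 𝕜]
    {A : Matrix m m 𝕜} (hA : A.PosSemidef) : Matrix m m 𝕜 :=
  hA.1.eigenvectorUnitary.1 * diagonal ((↑) ∘ (Real.sqrt ∘ hA.1.eigenvalues)) *
    (star hA.1.eigenvectorUnitary : Matrix m m 𝕜)

/-!
Completing the square, `-GᴴRG + GᴴS + SᴴG - T = D - WᴴRW` with `D = SᴴR⁻¹S - T` and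
`W = G - R⁻¹S`, so the hypothesis says `(R^{1/2}W)ᴴ(R^{1/2}W) ≤ D^{1/2} D^{1/2}`.
Conjugating by `D^{-1/2}` shows that `X = R^{1/2} W D^{-1/2}` satisfies `XᴴX ≤ 1`,
i.e. `‖X‖ ≤ 1`, and solving for `G` gives the claimed form.
-/

namespace Matrix

theorem neg_conjTranspose_mul_mul_add_eq_sub {m n α : Type*} [Fintype n] [DecidableEq n]
    [CommRing α] [StarRing α] {R : Matrix n n α} {S G : Matrix n m α}
    {T : Matrix m m α} (hR : R.IsHermitian) (hRu : IsUnit R) :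
    -(Gᴴ * R * G) + Gᴴ * S + Sᴴ * G - T =
      (Sᴴ * R⁻¹ * S - T) - (G - R⁻¹ * S)ᴴ * R * (G - R⁻¹ * S) := by
  have hRinv : R⁻¹ᴴ = R⁻¹ := by rw [conjTranspose_nonsing_inv, hR.eq]
  simp only [conjTranspose_sub, conjTranspose_mul, hRinv, Matrix.sub_mul, Matrix.mul_sub,
    Matrix.mul_assoc, mul_nonsing_inv_cancel_left _ _ ((isUnit_iff_isUnit_det R).mp hRu),
    nonsing_inv_mul_cancel_left _ _ ((isUnit_iff_isUnit_det R).mp hRu)]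
  abel

theorem PosSemidef.one_sub_conjTranspose_mul_self_mul_inv {m n α : Type*} [Fintype m]
    [Fintype n] [DecidableEq n] [CommRing α] [PartialOrder α] [StarRing α]
    {D : Matrix n n α} {Y : Matrix m n α} (hD : IsUnit D) (h : (Dᴴ * D - Yᴴ * Y).PosSemidef) :
    (1 - (Y * D⁻¹)ᴴ * (Y * D⁻¹)).PosSemidef := by
  have hDD : D⁻¹ᴴ * Dᴴ * (D * D⁻¹) = 1 := by
    rw [← conjTranspose_mul, mul_nonsing_inv _ ((isUnit_iff_isUnit_det D).mp hD),
      conjTranspose_one, Matrix.one_mul]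
  convert h.conjTranspose_mul_mul_same D⁻¹ using 1
  rw [Matrix.mul_sub, Matrix.sub_mul, conjTranspose_mul]
  simp only [Matrix.mul_assoc] at hDD ⊢
  rw [hDD]

namespace PosSemidef

variable {m 𝕜 : Type*} [Fintype m] [DecidableEq m] [RCLike 𝕜] {A : Matrix m m 𝕜}

theorem sqrt_eq_cfc (hA : A.PosSemidef) : hA.sqrt = cfc Real.sqrt A := by
  rw [hA.1.cfc_eq, IsHermitian.cfc, Unitary.conjStarAlgAut_apply]
  rfl

open scoped MatrixOrder in
theorem posSemidef_sqrt (hA : A.PosSemidef) : hA.sqrt.PosSemidef := by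
  rw [sqrt_eq_cfc, ← nonneg_iff_posSemidef]
  exact cfc_nonneg fun x _ ↦ Real.sqrt_nonneg x

open scoped MatrixOrder in
theorem sqrt_mul_self (hA : A.PosSemidef) : hA.sqrt * hA.sqrt = A := by
  rw [sqrt_eq_cfc, ← cfc_mul .., cfc_congr (g := id), cfc_id ℝ A]
  intro x hx
  exact Real.mul_self_sqrt (spectrum_nonneg_of_nonneg hA.nonneg hx)

theorem conjTranspose_sqrt_mul_mul_sqrt_mul {n : Type*} (hA : A.PosSemidef)
    (W : Matrix m n 𝕜) :
    (hA.sqrt * W)ᴴ * (hA.sqrt * W) = Wᴴ * A * W := by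
  rw [conjTranspose_mul, hA.posSemidef_sqrt.isHermitian.eq, Matrix.mul_assoc,
    ← Matrix.mul_assoc _ _ W, sqrt_mul_self, Matrix.mul_assoc]

end PosSemidef

theorem PosDef.isUnit_sqrt {m 𝕜 : Type*} [Fintype m] [DecidableEq m] [RCLike 𝕜]
    {A : Matrix m m 𝕜} (hA : A.PosDef) : IsUnit hA.posSemidef.sqrt :=
  isUnit_of_mul_isUnit_left (hA.posSemidef.sqrt_mul_self ▸ hA.isUnit)

open scoped MatrixOrder Matrix.Norms.L2Operator in
theorem norm_toEuclideanCLM_le_one {m : Type*} [Fintype m] [DecidableEq m]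
    {X : Matrix m m ℂ} (h : (1 - Xᴴ * X).PosSemidef) : ‖toEuclideanCLM (𝕜 := ℂ) X‖ ≤ 1 := by
  rw [← cstar_norm_def, ← sq_le_one_iff₀ (norm_nonneg _), sq, ← CStarRing.norm_star_mul_self,
    CStarAlgebra.norm_le_one_iff_of_nonneg _ (star_mul_self_nonneg X)]
  exact le_iff.mpr h

end Matrix

theorem weyl_ball_saturation_general (n : ℕ) (R S T G : Matrix (Fin n) (Fin n) ℂ)
    (hR : R.PosDef)
    (hD : (Sᴴ * R⁻¹ * S - T).PosDef)
    (hG : (-(Gᴴ * R * G) + Gᴴ * S + Sᴴ * G - T).PosSemidef) :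
    ∃ X : Matrix (Fin n) (Fin n) ℂ, opNorm X ≤ 1 ∧
      G = R⁻¹ * S + (hR.posSemidef.sqrt)⁻¹ * X * hD.posSemidef.sqrt := by
  set Rs := hR.posSemidef.sqrt
  set Ds := hD.posSemidef.sqrt
  set W := G - R⁻¹ * S
  have hW : (Dsᴴ * Ds - (Rs * W)ᴴ * (Rs * W)).PosSemidef := by
    rwa [hD.posSemidef.posSemidef_sqrt.isHermitian.eq, hD.posSemidef.sqrt_mul_self,
      hR.posSemidef.conjTranspose_sqrt_mul_mul_sqrt_mul,
      ← neg_conjTranspose_mul_mul_add_eq_sub hR.isHermitian hR.isUnit]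
  refine ⟨Rs * W * Ds⁻¹, norm_toEuclideanCLM_le_one
    (hW.one_sub_conjTranspose_mul_self_mul_inv hD.isUnit_sqrt), ?_⟩
  have hRs : IsUnit Rs.det := (isUnit_iff_isUnit_det Rs).mp hR.isUnit_sqrt
  have hDs : IsUnit Ds.det := (isUnit_iff_isUnit_det Ds).mp hD.isUnit_sqrt
  rw [Matrix.mul_assoc, nonsing_inv_mul_cancel_right _ _ hDs,
    nonsing_inv_mul_cancel_left _ _ hRs, add_sub_cancel]

/-- saturation step of the Weyl ball theorem: if
-GᴴRG + GᴴS + SᴴG - T ⪰ 0 with R ≻ 0 and SᴴR⁻¹S - T ≻ 0, then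
G = R⁻¹S + R^{-1/2} X (SᴴR⁻¹S - T)^{1/2} for some contraction X. -/
theorem weyl_ball_saturation (n : ℕ) (R S T G : Matrix (Fin n) (Fin n) ℂ)
    (hR : R.PosDef) (hT : T.IsHermitian)
    (hD : (Sᴴ * R⁻¹ * S - T).PosDef)
    (hG : (-(Gᴴ * R * G) + Gᴴ * S + Sᴴ * G - T).PosSemidef) :
    ∃ X : Matrix (Fin n) (Fin n) ℂ, opNorm X ≤ 1 ∧
      G = R⁻¹ * S + (hR.posSemidef.sqrt)⁻¹ * X * hD.posSemidef.sqrt :=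
  weyl_ball_saturation_general n R S T G hR hD hG
end

section
/- Fundamental lemma on block matrices: a Hermitian block matrix [[A, B],[Bᴴ, C]] (A, C square Hermitian) is positive semidefinite if and only if: A ⪰ 0, there exists X with A X = B, and C - Xᴴ A X ⪰ 0 for such X; moreover Xᴴ A X is independent of the choice of solution X of A X = B. -/
/-!
If `A X = B`, then `[[A, B], [Bᴴ, C]] = Lᴴ · diag(A, C - Xᴴ A X) · L` with the invertible
`L = [[1, X], [0, 1]]`, so positivity of the block matrix is that of `A` and of `C - Xᴴ A X`.
A solution `X` exists as soon as the block matrix `M` is positive semidefinite: for `v ∈ ker A`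
the quadratic form of `M` vanishes at `(v, 0)`, hence `M (v, 0) = 0`, i.e. `Bᴴ v = 0`; so
`ker A ⊆ ker Bᴴ`, and the columns of `B` lie in `(ker Aᴴ)ᗮ = range A`.
-/

open ComplexOrder Matrix

namespace Matrix

section Block

variable {m n R : Type*} [Fintype n]

theorem conjTranspose_mul_mul_eq_of_mul_eq [CommRing R] [StarRing R] {A : Matrix n n R}
    {B X Y : Matrix n m R} (hA : A.IsHermitian) (hX : A * X = B) (hY : A * Y = B) :
    Xᴴ * A * X = Yᴴ * A * Y := by
  have hXA : Xᴴ * A = Bᴴ := by rw [← hX, conjTranspose_mul, hA.eq]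
  have hYA : Yᴴ * A = Bᴴ := by rw [← hY, conjTranspose_mul, hA.eq]
  rw [hXA, ← hYA, Matrix.mul_assoc, Matrix.mul_assoc, hX, hY]

variable [Fintype m]

theorem fromBlocks_eq_star_mul_mul_of_mul_eq [CommRing R] [StarRing R] [DecidableEq m]
    [DecidableEq n] {A : Matrix n n R} {B X : Matrix n m R} (C : Matrix m m R)
    (hA : A.IsHermitian) (hX : A * X = B) :
    fromBlocks A B Bᴴ C =
      star (fromBlocks 1 X 0 1) * fromBlocks A 0 0 (C - Xᴴ * A * X) * fromBlocks 1 X 0 1 := by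
  have hXA : Xᴴ * A = Bᴴ := by rw [← hX, conjTranspose_mul, hA.eq]
  simp [star_eq_conjTranspose, fromBlocks_conjTranspose, fromBlocks_multiply, hXA, hX]

theorem posSemidef_fromBlocks_iff_of_mul_eq [CommRing R] [PartialOrder R] [StarRing R]
    [DecidableEq m] [DecidableEq n] {A : Matrix n n R} {B X : Matrix n m R} (C : Matrix m m R)
    (hA : A.IsHermitian) (hX : A * X = B) :
    (fromBlocks A B Bᴴ C).PosSemidef ↔ (fromBlocks A 0 0 (C - Xᴴ * A * X)).PosSemidef := by
  rw [fromBlocks_eq_star_mul_mul_of_mul_eq C hA hX]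
  exact IsUnit.posSemidef_star_left_conjugate_iff
    (isUnit_fromBlocks_zero₂₁.mpr ⟨isUnit_one, isUnit_one⟩)

theorem posSemidef_fromBlocks_zero_iff [Ring R] [PartialOrder R] [StarRing R]
    [IsOrderedAddMonoid R] {A : Matrix n n R} {D : Matrix m m R} :
    (fromBlocks A 0 0 D).PosSemidef ↔ A.PosSemidef ∧ D.PosSemidef := by
  refine ⟨fun h => ⟨h.submatrix Sum.inl, h.submatrix Sum.inr⟩,
    fun ⟨hA, hD⟩ => posSemidef_iff_dotProduct_mulVec.mpr ⟨?_, fun x => ?_⟩⟩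
  · simp [IsHermitian, fromBlocks_conjTranspose, hA.isHermitian.eq, hD.isHermitian.eq]
  · rw [← Sum.elim_comp_inl_inr x, fromBlocks_mulVec]
    simp only [zero_mulVec, add_zero, zero_add, Function.star_sumElim, sumElim_dotProduct_sumElim]
    exact add_nonneg (hA.dotProduct_mulVec_nonneg _) (hD.dotProduct_mulVec_nonneg _)

end Block

variable {𝕜 : Type*} [RCLike 𝕜]

theorem PosSemidef.fromBlocks₂₁_mulVec_eq_zero {m n : Type*} [Fintype m] [Fintype n]
    {A : Matrix n n 𝕜} {B : Matrix n m 𝕜} {C : Matrix m n 𝕜} {D : Matrix m m 𝕜}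
    (hM : (fromBlocks A B C D).PosSemidef) {v : n → 𝕜} (hv : A *ᵥ v = 0) : C *ᵥ v = 0 := by
  have h := (hM.dotProduct_mulVec_zero_iff (Sum.elim v 0)).mp
    (by simp [fromBlocks_mulVec, hv, Function.star_sumElim])
  ext i
  simpa [fromBlocks_mulVec] using congrFun h (Sum.inr i)

theorem exists_mul_eq_of_conjTranspose_mulVec_eq_zero {l m n : Type*} [Fintype l] [Fintype n]
    [DecidableEq l] [DecidableEq n] {A : Matrix n l 𝕜} {B : Matrix n m 𝕜}
    (h : ∀ v, Aᴴ *ᵥ v = 0 → Bᴴ *ᵥ v = 0) : ∃ X : Matrix l m 𝕜, A * X = B := by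
  have hcol : ∀ j, ∃ x, A *ᵥ x = Bᵀ j := by
    intro j
    have hrange : WithLp.toLp 2 (Bᵀ j) ∈ LinearMap.range (toEuclideanLin A) := by
      rw [← Submodule.orthogonal_orthogonal (LinearMap.range _), LinearMap.orthogonal_range,
        ← toEuclideanLin_conjTranspose_eq_adjoint]
      intro v hv
      have hBv := congrFun (h v.ofLp (by simpa [toLpLin_apply] using hv)) j
      rw [EuclideanSpace.inner_eq_star_dotProduct]
      simpa [mulVec, dotProduct, mul_comm] using congrArg (starRingEnd 𝕜) hBv
    obtain ⟨x, hx⟩ := hrange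
    exact ⟨x.ofLp, by simpa using congrArg WithLp.ofLp hx⟩
  choose x hx using hcol
  refine ⟨(of x)ᵀ, ?_⟩
  ext i j
  simpa [mul_apply, mulVec, dotProduct, mul_comm] using congrFun (hx j) i

end Matrix

theorem fundamental_block_lemma_general (n m : ℕ) (A : Matrix (Fin n) (Fin n) ℂ)
    (B : Matrix (Fin n) (Fin m) ℂ) (C : Matrix (Fin m) (Fin m) ℂ)
    (hA : A.IsHermitian) :
    ((Matrix.fromBlocks A B Bᴴ C).PosSemidef ↔
      (A.PosSemidef ∧ (∃ X : Matrix (Fin n) (Fin m) ℂ, A * X = B) ∧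
        ∀ X : Matrix (Fin n) (Fin m) ℂ, A * X = B → (C - Xᴴ * A * X).PosSemidef)) ∧
    (∀ X Y : Matrix (Fin n) (Fin m) ℂ, A * X = B → A * Y = B →
      Xᴴ * A * X = Yᴴ * A * Y) := by
  have hSchur : ∀ X : Matrix (Fin n) (Fin m) ℂ, A * X = B →
      ((fromBlocks A B Bᴴ C).PosSemidef ↔ A.PosSemidef ∧ (C - Xᴴ * A * X).PosSemidef) :=
    fun X hX => (posSemidef_fromBlocks_iff_of_mul_eq C hA hX).trans posSemidef_fromBlocks_zero_iff
  refine ⟨⟨fun hM => ?_, ?_⟩, fun _ _ hX hY => conjTranspose_mul_mul_eq_of_mul_eq hA hX hY⟩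
  · obtain ⟨X, hX⟩ := exists_mul_eq_of_conjTranspose_mulVec_eq_zero fun v hv =>
      hM.fromBlocks₂₁_mulVec_eq_zero (hA.eq ▸ hv)
    exact ⟨((hSchur X hX).mp hM).1, ⟨X, hX⟩, fun Y hY => ((hSchur Y hY).mp hM).2⟩
  · rintro ⟨hApsd, ⟨X, hX⟩, hSchurPsd⟩
    exact (hSchur X hX).mpr ⟨hApsd, hSchurPsd X hX⟩

/-- fundamental lemma on block matrices: [[A, B],[Bᴴ, C]] ⪰ 0 iff
A ⪰ 0, A X = B is solvable, and C - Xᴴ A X ⪰ 0 for every solution X; moreover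
Xᴴ A X does not depend on the choice of solution X. -/
theorem fundamental_block_lemma (n m : ℕ) (A : Matrix (Fin n) (Fin n) ℂ)
    (B : Matrix (Fin n) (Fin m) ℂ) (C : Matrix (Fin m) (Fin m) ℂ)
    (hA : A.IsHermitian) (hC : C.IsHermitian) :
    ((Matrix.fromBlocks A B Bᴴ C).PosSemidef ↔
      (A.PosSemidef ∧ (∃ X : Matrix (Fin n) (Fin m) ℂ, A * X = B) ∧
        ∀ X : Matrix (Fin n) (Fin m) ℂ, A * X = B → (C - Xᴴ * A * X).PosSemidef)) ∧
    (∀ X Y : Matrix (Fin n) (Fin m) ℂ, A * X = B → A * Y = B →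
      Xᴴ * A * X = Yᴴ * A * Y) :=
  fundamental_block_lemma_general n m A B C hA
end
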